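/- arXiv:1106.0984 — 6 statements merged into one kernel-verified Lean document; each statement's English description precedes it below -/
import Mathlib

section
/- Let A be a ring, (B_i)_{i ∈ I} a family of A-algebras, and Y a quasiseparated A-scheme. Then the natural map Y(∏_{i∈I} B_i) → ∏_{i∈I} Y(B_i) is injective. -/
open AlgebraicGeometry CategoryTheory

/-- The set `Y(B)` of `A`-morphisms `Spec B → Y`, for `Y` a scheme over `Spec A`. -/
def SchemePoints (A : Type u) [CommRing A] (Y : Scheme.{u})
    (sY : Y ⟶ Spec (CommRingCat.of A)) (B : Type u) [CommRing B] [Algebra A B] : Type u :=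
  { f : Spec (CommRingCat.of B) ⟶ Y //
      f ≫ sY = Spec.map (CommRingCat.ofHom (algebraMap A B)) }

/-- The natural map `Y(∏ᵢ Bᵢ) → Y(Bᵢ)` induced by the projection `∏ᵢ Bᵢ → Bᵢ`. -/
noncomputable def SchemePoints.component (A : Type u) [CommRing A] (Y : Scheme.{u})
    (sY : Y ⟶ Spec (CommRingCat.of A)) {I : Type u}
    (B : I → Type u) [∀ i, CommRing (B i)] [∀ i, Algebra A (B i)]
    (f : SchemePoints A Y sY (Π i, B i)) (i : I) : SchemePoints A Y sY (B i) :=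
  ⟨Spec.map (CommRingCat.ofHom (Pi.evalRingHom B i)) ≫ f.1, by
    rw [Category.assoc, f.2, ← Spec.map_comp]
    rfl⟩

/-!
The two points `f g : Spec (∏ Bᵢ) ⟶ Y` have an equalizer `E ⟶ Spec (∏ Bᵢ)`, a base change of the
diagonal of `Y`, hence a quasicompact immersion, and every `Spec Bᵢ ⟶ Spec (∏ Bᵢ)` factors through
it. The factorizations make `E ⟶ Spec (∏ Bᵢ)` injective on global sections, hence dominant, so its
locally closed image is open; being also quasicompact, it is the complement of `V(J)` for a
finitely generated ideal `J`. Since the image contains every `Spec Bᵢ`, `J` generates the unit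
ideal of each `Bᵢ`; a relation `1 = ∑ cₖ aₖ` in each factor, with the finitely many generators `aₖ`
of `J`, assembles into one in `∏ Bᵢ`, so `J = ⊤`. Thus `E ⟶ Spec (∏ Bᵢ)` is a surjective, hence
closed, immersion that is injective on global sections, i.e. an isomorphism, and `f = g`.
-/

open Limits

lemma IsLocallyClosed.isOpen_of_dense {X : Type*} [TopologicalSpace X] {s : Set X}
    (hs : IsLocallyClosed s) (hd : Dense s) : IsOpen s := by
  simpa [coborder_eq_union_closure_compl, hd.closure_eq] using hs.isOpen_coborder

lemma Ideal.eq_top_of_fg_of_forall_map_evalRingHom_eq_top {I : Type*} {B : I → Type*}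
    [∀ i, CommRing (B i)] {J : Ideal (Π i, B i)} (hJ : J.FG)
    (h : ∀ i, J.map (Pi.evalRingHom B i) = ⊤) : J = ⊤ := by
  obtain ⟨n, a, rfl⟩ := Submodule.fg_iff_exists_fin_generating_family.mp hJ
  have h_one : ∀ i, ∃ c : Fin n → B i, ∑ k, c k * a k i = 1 := by
    intro i
    have := (h i).symm ▸ Submodule.mem_top (x := (1 : B i))
    rw [Ideal.map_span, ← Set.range_comp] at this
    exact Ideal.mem_span_range_iff_exists_fun.mp this
  choose c hc using h_one
  have h_sum : (1 : Π i, B i) = ∑ k, (fun i => c i k) * a k :=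
    funext fun i => by simp [Finset.sum_apply, hc]
  rw [Ideal.eq_top_iff_one, h_sum]
  exact Ideal.sum_mem _ fun k _ => Ideal.mul_mem_left _ _ (Ideal.subset_span ⟨k, rfl⟩)

lemma PrimeSpectrum.eq_univ_of_forall_range_comap_evalRingHom_subset {I : Type*} {B : I → Type*}
    [∀ i, CommRing (B i)] {U : Set (PrimeSpectrum (Π i, B i))} (hc : IsCompact U) (ho : IsOpen U)
    (h : ∀ i, Set.range (PrimeSpectrum.comap (Pi.evalRingHom B i)) ⊆ U) : U = Set.univ := by
  obtain ⟨J, hJ, rfl⟩ := PrimeSpectrum.isCompact_isOpen_iff_ideal.mp ⟨hc, ho⟩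
  suffices J = ⊤ by simp [this]
  refine Ideal.eq_top_of_fg_of_forall_map_evalRingHom_eq_top hJ fun i => ?_
  by_contra hne
  obtain ⟨m, hm, hle⟩ := Ideal.exists_le_maximal _ hne
  exact h i ⟨⟨m, hm.isPrime⟩, rfl⟩ (Ideal.map_le_iff_le_comap.mp hle)

namespace AlgebraicGeometry

variable {I : Type u} {B : I → Type u} [∀ i, CommRing (B i)]

lemma appTop_injective_of_forall_factors {X : Scheme.{u}} (f : X ⟶ Spec (.of (Π i, B i)))
    (h : ∀ i, ∃ g : Spec (.of (B i)) ⟶ X,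
      g ≫ f = Spec.map (CommRingCat.ofHom (Pi.evalRingHom B i))) :
    Function.Injective f.appTop := by
  rw [injective_iff_map_eq_zero]
  intro s hs
  suffices (Scheme.ΓSpecIso _).hom s = 0 by
    simpa using congr((Scheme.ΓSpecIso (.of (Π i, B i))).inv $this)
  funext i
  obtain ⟨g, hg⟩ := h i
  have := congr((Scheme.ΓSpecIso (.of (B i))).hom ((Scheme.Hom.appTop $hg) s))
  rwa [Scheme.Hom.comp_appTop, CommRingCat.comp_apply, hs, map_zero, map_zero,
    ← CommRingCat.comp_apply, Scheme.ΓSpecIso_naturality, CommRingCat.comp_apply, eq_comm] at this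

lemma isIso_of_isImmersion_of_forall_factors {X : Scheme.{u}} (f : X ⟶ Spec (.of (Π i, B i)))
    [IsImmersion f] [CompactSpace X]
    (h : ∀ i, ∃ g : Spec (.of (B i)) ⟶ X,
      g ≫ f = Spec.map (CommRingCat.ofHom (Pi.evalRingHom B i))) :
    IsIso f := by
  have h_inj := appTop_injective_of_forall_factors f h
  have : IsDominant f := isDominant_of_of_appTop_injective h_inj
  have h_open : IsOpen (Set.range f) := f.isLocallyClosed_range.isOpen_of_dense f.denseRange
  have h_univ : Set.range f = Set.univ :=
    PrimeSpectrum.eq_univ_of_forall_range_comap_evalRingHom_subset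
      (isCompact_range f.continuous) h_open fun i => by
        obtain ⟨g, hg⟩ := h i
        rintro _ ⟨x, rfl⟩
        exact ⟨g x, congr($hg x)⟩
  have : IsClosedImmersion f := .of_isPreimmersion f (h_univ ▸ isClosed_univ)
  exact IsClosedImmersion.isIso_of_injective_of_isAffine h_inj

lemma Spec_pi_hom_ext {Y : Scheme.{u}} [QuasiSeparatedSpace Y]
    (f g : Spec (.of (Π i, B i)) ⟶ Y)
    (h : ∀ i, Spec.map (CommRingCat.ofHom (Pi.evalRingHom B i)) ≫ f =
      Spec.map (CommRingCat.ofHom (Pi.evalRingHom B i)) ≫ g) : f = g := by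
  have := isIso_of_isImmersion_of_forall_factors (equalizer.ι f g)
    fun i => ⟨equalizer.lift _ (h i), equalizer.lift_ι _ _⟩
  rw [← cancel_epi (equalizer.ι f g)]
  exact equalizer.condition f g

end AlgebraicGeometry

/-- For a quasiseparated scheme `Y` over `Spec A` and a family `(Bᵢ)` of `A`-algebras, the
natural map `Y(∏ᵢ Bᵢ) → ∏ᵢ Y(Bᵢ)` is injective. -/
theorem points_of_product_injective_of_quasiSeparated
    (A : Type u) [CommRing A] (Y : Scheme.{u}) (sY : Y ⟶ Spec (CommRingCat.of A))
    [QuasiSeparatedSpace Y] (I : Type u) (B : I → Type u) [∀ i, CommRing (B i)] [∀ i, Algebra A (B i)] :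
    Function.Injective
      (fun f : SchemePoints A Y sY (Π i, B i) =>
        fun i : I => SchemePoints.component A Y sY B f i) := by
  intro f g hfg
  exact Subtype.ext <| Spec_pi_hom_ext f.1 g.1 fun i => congr(($hfg i).1)
end

section
/- Let A be a ring, (B_i)_{i ∈ I} a family of local A-algebras, and Y a quasicompact and quasiseparated A-scheme. Then the natural map Y(∏_{i∈I} B_i) → ∏_{i∈I} Y(B_i) is a bijection. -/
open AlgebraicGeometry CategoryTheory

/-!
Injectivity holds for every quasi-separated `Y`: the equalizer of two points of `Y(∏ᵢ Bᵢ)`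
with the same components is a quasi-compact immersion into `Spec (∏ᵢ Bᵢ)` through which every
`Spec Bᵢ` factors, and such an immersion is an isomorphism. For surjectivity, the closed point of
`Spec Bᵢ` lands in one of finitely many affine opens covering `Y`, and then (as `Bᵢ` is local)
all of `Spec Bᵢ` does; this partitions `I` into finitely many pieces, `Spec (∏ᵢ Bᵢ)` is the
disjoint union of the spectra of the partial products, and over an affine target points are
ring maps, which glue across a product.
-/

lemma pointsPi_specMap_algebraMap (A : Type u) [CommRing A] {I : Type u} (B : I → Type u)
    [∀ i, CommRing (B i)] [∀ i, Algebra A (B i)] :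
    pointsPi (fun i => CommRingCat.of (B i)) (Spec (CommRingCat.of A))
        (Spec.map (CommRingCat.ofHom (algebraMap A (Π i, B i)))) =
      fun i => Spec.map (CommRingCat.ofHom (algebraMap A (B i))) := by
  funext i
  rw [pointsPi, ← Spec.map_comp]
  rfl

/-- For a quasicompact quasiseparated scheme `Y` over `Spec A` and a family `(Bᵢ)` of
*local* `A`-algebras, the natural map `Y(∏ᵢ Bᵢ) → ∏ᵢ Y(Bᵢ)` is bijective. -/
theorem points_of_product_bijective_of_local
    (A : Type u) [CommRing A] (Y : Scheme.{u}) (sY : Y ⟶ Spec (CommRingCat.of A))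
    [CompactSpace Y] [QuasiSeparatedSpace Y]
    (I : Type u) (B : I → Type u) [∀ i, CommRing (B i)] [∀ i, Algebra A (B i)]
    [∀ i, IsLocalRing (B i)] :
    Function.Bijective
      (fun f : SchemePoints A Y sY (Π i, B i) =>
        fun i : I => SchemePoints.component A Y sY B f i) := by
  let R : I → CommRingCat.{u} := fun i => CommRingCat.of (B i)
  refine ⟨fun f g hfg => Subtype.ext <| pointsPi_injective R Y <| funext fun i =>
    congrArg Subtype.val (congrFun hfg i), fun F => ?_⟩
  obtain ⟨f, hf⟩ := pointsPi_surjective R Y fun i => (F i).1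
  have hA : f ≫ sY = Spec.map (CommRingCat.ofHom (algebraMap A (Π i, B i))) := by
    apply pointsPi_injective R (Spec (CommRingCat.of A))
    rw [pointsPi_specMap_algebraMap]
    funext i
    rw [pointsPi, ← Category.assoc]
    exact (congrArg (· ≫ sY) (congrFun hf i)).trans (F i).2
  exact ⟨⟨f, hA⟩, funext fun i => Subtype.ext (congrFun hf i)⟩
end

section
/- Let V be a Henselian local ring with maximal ideal m, and let g ∈ V[X] be a polynomial. Suppose x̃ ∈ V satisfies g(x̃) ≡ 0 mod g'(x̃)² m, i.e., e := g(x̃)/g'(x̃)² exists in V and lies in m (where g'(x̃) ≠ 0 and g'(x̃)² divides g(x̃) with quotient in m). Then there exists x̄ ∈ V with g(x̄) = 0 and x̄ ≡ x̃ mod e·g'(x̃). -/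
open Polynomial IsLocalRing Finset

/-- Hensel–Rychlik lemma: if `V` is a Henselian local ring with maximal ideal `m`,
`g ∈ V[X]`, and `x₀ ∈ V` satisfies `g(x₀) = e * g'(x₀)^2` with `e ∈ m` and `g'(x₀) ≠ 0`,
then there is `x₁ ∈ V` with `g(x₁) = 0` and `x₁ ≡ x₀ mod e·g'(x₀)`. -/
theorem hensel_rychlik
    (V : Type*) [CommRing V] [HenselianLocalRing V]
    (g : Polynomial V) (x₀ e : V)
    (he : e ∈ IsLocalRing.maximalIdeal V)
    (hne : Polynomial.eval x₀ (Polynomial.derivative g) ≠ 0)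
    (heq : Polynomial.eval x₀ g = e * (Polynomial.eval x₀ (Polynomial.derivative g)) ^ 2) :
    ∃ x₁ : V, Polynomial.eval x₁ g = 0 ∧
      e * Polynomial.eval x₀ (Polynomial.derivative g) ∣ (x₁ - x₀) := by
  set g' : V := Polynomial.eval x₀ (Polynomial.derivative g) with hg'def
  set n : ℕ := g.natDegree with hndef
  -- `n ≥ 1`
  have hn1 : 1 ≤ n := by
    rcases Nat.eq_zero_or_pos n with h0 | h
    · obtain ⟨a, ha⟩ := Polynomial.natDegree_eq_zero.mp h0
      exact absurd (by rw [hg'def, ← ha]; simp) hne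
    · exact h
  -- Taylor coefficients
  set t : ℕ → V := fun k => (Polynomial.taylor x₀ g).coeff k with htdef
  have ht0 : t 0 = e * g' ^ 2 := by
    simp only [htdef, Polynomial.taylor_coeff_zero]; exact heq
  have ht1 : t 1 = g' := by
    simp only [htdef, Polynomial.taylor_coeff_one, hg'def]
  -- the auxiliary polynomial
  set h : Polynomial V :=
    ∑ k ∈ Finset.Icc 2 n, Polynomial.C (t k * e ^ (k - 2) * g' ^ (k - 2)) * Polynomial.X ^ k
    with hhdef
  set F : Polynomial V := 1 + Polynomial.X + Polynomial.C e * h with hFdef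
  -- key identity
  have key : ∀ T : V, Polynomial.eval (x₀ + (e * g') * T) g
      = e * g' ^ 2 * Polynomial.eval T F := by
    intro T
    have h1 : Polynomial.eval (x₀ + (e * g') * T) g
        = Polynomial.eval ((e * g') * T) (Polynomial.taylor x₀ g) := by
      rw [Polynomial.taylor_eval, add_comm]
    have h2 : (Polynomial.taylor x₀ g).natDegree < n + 1 := by
      rw [Polynomial.natDegree_taylor]; omega
    rw [h1, Polynomial.eval_eq_sum_range' h2]
    have hsplit : ∑ i ∈ Finset.range (n + 1), t i * ((e * g') * T) ^ i
        = (∑ i ∈ Finset.range 2, t i * ((e * g') * T) ^ i)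
          + ∑ i ∈ Finset.Ico 2 (n + 1), t i * ((e * g') * T) ^ i := by
      rw [Finset.range_eq_Ico]
      exact (Finset.sum_Ico_consecutive _ (Nat.zero_le 2) (by omega : 2 ≤ n + 1)).symm
    have hIcc : Finset.Icc 2 n = Finset.Ico 2 (n + 1) := by
      rw [Finset.Ico_add_one_right_eq_Icc]
    rw [hsplit]
    simp only [hFdef, hhdef, Polynomial.eval_add, Polynomial.eval_mul, Polynomial.eval_one,
      Polynomial.eval_X, Polynomial.eval_C, Polynomial.eval_finset_sum, Polynomial.eval_pow]
    rw [Finset.sum_range_succ, Finset.sum_range_one, ht0, ht1, hIcc]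
    have hterm : ∀ k ∈ Finset.Ico 2 (n + 1),
        t k * ((e * g') * T) ^ k
          = e * g' ^ 2 * (e * (t k * e ^ (k - 2) * g' ^ (k - 2) * T ^ k)) := by
      intro k hk
      have hk2 : 2 ≤ k := (Finset.mem_Ico.mp hk).1
      obtain ⟨j, rfl⟩ := Nat.exists_eq_add_of_le hk2
      simp only [Nat.add_sub_cancel_left, Nat.add_sub_cancel]
      ring
    rw [Finset.sum_congr rfl hterm, ← Finset.mul_sum, ← Finset.mul_sum]
    ring
  -- degree bound for F
  have hhdeg : h.natDegree ≤ n := by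
    refine (Polynomial.natDegree_sum_le _ _).trans ?_
    rw [Finset.fold_max_le]
    refine ⟨by omega, fun k hk => ?_⟩
    refine (Polynomial.natDegree_C_mul_le _ _).trans ?_
    rw [Polynomial.natDegree_X_pow]
    exact (Finset.mem_Icc.mp hk).2
  have hFdeg : F.natDegree ≤ n := by
    refine (Polynomial.natDegree_add_le _ _).trans (max_le ?_ ?_)
    · refine (Polynomial.natDegree_add_le _ _).trans (max_le ?_ ?_)
      · simp
      · simpa using hn1
    · exact (Polynomial.natDegree_C_mul_le _ _).trans hhdeg
  -- the reflected (monic) polynomial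
  set P : Polynomial V := Polynomial.reflect n F with hPdef
  have hPform : P = Polynomial.X ^ n + Polynomial.X ^ (n - 1)
      + Polynomial.C e * Polynomial.reflect n h := by
    rw [hPdef, hFdef, Polynomial.reflect_add, Polynomial.reflect_add,
      Polynomial.reflect_one, Polynomial.reflect_C_mul]
    have hX : Polynomial.reflect n (Polynomial.X : Polynomial V)
        = Polynomial.X ^ (n - 1) := by
      conv_lhs => rw [← pow_one (Polynomial.X : Polynomial V)]
      rw [Polynomial.reflect_monomial, Polynomial.revAt_le hn1]
    rw [hX]
  have hreflhdeg : (Polynomial.reflect n h).natDegree ≤ n := by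
    refine Polynomial.natDegree_le_iff_coeff_eq_zero.mpr fun i hi => ?_
    rw [Polynomial.coeff_reflect]
    apply Polynomial.coeff_eq_zero_of_natDegree_lt
    calc h.natDegree ≤ n := hhdeg
      _ < Polynomial.revAt n i := by
          rwa [Polynomial.revAt_eq_self_of_lt hi]

  -- P is monic
  have hPdeg : P.natDegree ≤ n := by
    rw [hPform]
    refine (Polynomial.natDegree_add_le _ _).trans (max_le ?_ ?_)
    · refine (Polynomial.natDegree_add_le _ _).trans (max_le ?_ ?_)
      · simp
      · rw [Polynomial.natDegree_X_pow]; omega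
    · exact (Polynomial.natDegree_C_mul_le _ _).trans hreflhdeg
  have hPcoeff : P.coeff n = 1 := by
    rw [hPform]
    have h1 : (Polynomial.X ^ (n - 1) : Polynomial V).coeff n = 0 := by
      rw [Polynomial.coeff_X_pow, if_neg (by omega)]
    have h2 : (Polynomial.reflect n h).coeff n = 0 := by
      rw [Polynomial.coeff_reflect, Polynomial.revAt_le (le_refl n), Nat.sub_self]
      rw [hhdef, Polynomial.finset_sum_coeff]
      refine Finset.sum_eq_zero fun k hk => ?_
      rw [Polynomial.coeff_C_mul, Polynomial.coeff_X_pow,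
        if_neg (by have := (Finset.mem_Icc.mp hk).1; omega), mul_zero]
    simp [h1, h2, Polynomial.coeff_X_pow]
  have hPmonic : P.Monic := Polynomial.monic_of_natDegree_le_of_coeff_eq_one n hPdeg hPcoeff
  -- P(-1) ∈ m
  set r : V := Polynomial.eval (-1 : V) (Polynomial.reflect n h) with hrdef
  have hPeval : Polynomial.eval (-1 : V) P = e * r := by
    rw [hPform]
    simp only [Polynomial.eval_add, Polynomial.eval_mul, Polynomial.eval_pow,
      Polynomial.eval_X, Polynomial.eval_C, hrdef]
    have hz : ((-1 : V)) ^ n + (-1) ^ (n - 1) = 0 := by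
      obtain ⟨m, hm⟩ : ∃ m, n = m + 1 := ⟨n - 1, by omega⟩
      rw [hm, Nat.add_sub_cancel, pow_succ]
      ring
    rw [hz, zero_add]
  have hPmem : Polynomial.eval (-1 : V) P ∈ IsLocalRing.maximalIdeal V := by
    rw [hPeval]; exact Ideal.mul_mem_right _ _ he
  -- P'(-1) is a unit
  have hone : (1 : V) ∉ IsLocalRing.maximalIdeal V := fun hmem =>
    (IsLocalRing.maximalIdeal.isMaximal V).ne_top ((Ideal.eq_top_iff_one _).mpr hmem)
  have hPderiv : IsUnit (Polynomial.eval (-1 : V) (Polynomial.derivative P)) := by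
    set r' : V := Polynomial.eval (-1 : V) (Polynomial.derivative (Polynomial.reflect n h))
      with hr'def
    have hval : Polynomial.eval (-1 : V) (Polynomial.derivative P)
        = (-1) ^ n * (-1) + e * r' := by
      rw [hPform]
      simp only [Polynomial.derivative_add, Polynomial.derivative_X_pow,
        Polynomial.derivative_C_mul, Polynomial.eval_add, Polynomial.eval_mul,
        Polynomial.eval_pow, Polynomial.eval_natCast, Polynomial.eval_X,
        Polynomial.eval_C, hr'def]
      rcases n with _ | _ | m
      · omega
      · norm_num
      · push_cast
        have h2 : ((-1 : V)) ^ (m + 1 + 1) = (-1) ^ m := by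
          rw [pow_succ, pow_succ]; ring
        have h1 : ((-1 : V)) ^ (m + 1) = (-1) ^ m * -1 := pow_succ _ _
        rw [h2, h1]
        ring
    by_contra hu
    have hmem : Polynomial.eval (-1 : V) (Polynomial.derivative P)
        ∈ IsLocalRing.maximalIdeal V := by
      rwa [IsLocalRing.mem_maximalIdeal, mem_nonunits_iff]
    have h1 : (-1 : V) ^ n * (-1) ∈ IsLocalRing.maximalIdeal V := by
      have := Ideal.sub_mem _ hmem (Ideal.mul_mem_right r' _ he : e * r' ∈ _)
      rwa [hval, add_sub_cancel_right] at this
    have hsq : ((-1 : V) ^ n * (-1)) * ((-1 : V) ^ n * (-1)) = 1 := by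
      rw [show ((-1 : V) ^ n * (-1)) * ((-1 : V) ^ n * (-1))
          = ((-1 : V) * (-1)) ^ n * ((-1) * (-1)) from by rw [mul_pow]; ring]
      norm_num
    exact hone (hsq ▸ Ideal.mul_mem_right _ _ h1)
  -- apply the Henselian property
  obtain ⟨S, hSroot, hSmem⟩ := HenselianLocalRing.is_henselian P hPmonic (-1) hPmem hPderiv
  -- S is a unit
  have hSunit : IsUnit S := by
    by_contra hu
    have : S ∈ IsLocalRing.maximalIdeal V := by
      rwa [IsLocalRing.mem_maximalIdeal, mem_nonunits_iff]
    have : (-1 : V) ∈ IsLocalRing.maximalIdeal V := by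
      have := Ideal.sub_mem _ this hSmem
      simpa using this
    exact hone (by simpa using Ideal.mul_mem_right (-1) _ this)
  set u : Vˣ := hSunit.unit with hudef
  have hSu : (u : V) = S := hSunit.unit_spec
  -- from the root of P, get a root of F at u⁻¹
  have : Invertible ((u⁻¹ : Vˣ) : V) := (u⁻¹ : Vˣ).invertible
  have hinv : ⅟ ((u⁻¹ : Vˣ) : V) = (u : V) := invOf_eq_right_inv (by
    rw [← Units.val_mul, inv_mul_cancel, Units.val_one])
  have hre := Polynomial.eval₂_reflect_mul_pow (RingHom.id V) ((u⁻¹ : Vˣ) : V) n F hFdeg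
  rw [hinv] at hre
  have hF0 : Polynomial.eval ((u⁻¹ : Vˣ) : V) F = 0 := by
    have hPu : Polynomial.eval₂ (RingHom.id V) (u : V) P = 0 := by
      show Polynomial.eval (u : V) P = 0
      rw [hSu]; exact hSroot
    have : Polynomial.eval₂ (RingHom.id V) ((u⁻¹ : Vˣ) : V) F = 0 := by
      rw [← hre, hPu, zero_mul]
    exact this
  refine ⟨x₀ + (e * g') * ((u⁻¹ : Vˣ) : V), ?_, ?_⟩
  · rw [key, hF0, mul_zero]
  · exact ⟨((u⁻¹ : Vˣ) : V), by ring⟩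
end

section
/- Let V be a Henselian valuation ring, P a prime ideal of V with quotient map π : V → V/P, and A ⊆ V a subring. Let A' ⊆ V/P be a subring containing π(A), and assume π restricted to A is injective and the field extension Frac(A')/Frac(π(A)) is separably algebraic, with A' = A[x] for x a root of an irreducible separable polynomial g ∈ A[X] (viewing A ⊆ V/P via π). Then there exists x̄ ∈ V with g(x̄) = 0 and π(x̄) = x; consequently the subring A[x̄] ⊆ V maps isomorphically onto A' under π. -/
/-!
Lift `x` to any `y ∈ V`. Since `g` is separable and irreducible, `g'(y) ∉ P`, and as `V` is a
valuation ring, `g(y) = g'(y)² t` with `t ∈ P`. Newton's substitution `X = y + g'(y) t Z` turns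
`g` into `g'(y)² t · k(Z)` with `k ≡ 1 + Z` modulo the maximal ideal; the reverse of `k` is
monic with the simple root `-1` modulo the maximal ideal, so `k` has a root because `V` is
Henselian. This gives a root `x₁ ≡ y (mod P)`. Finally, if `π(p(x₁)) = 0` then `p(x) = 0`, so
`g ∣ p` over `Frac A` by irreducibility, hence `p(x₁) = 0`: `π` is injective on `A[x₁]`.
-/

open Polynomial IsLocalRing

theorem PreValuationRing.exists_mem_eq_mul_of_mem_of_notMem {V : Type*} [CommRing V]
    [PreValuationRing V] {P : Ideal V} [P.IsPrime] {b c : V} (hb : b ∈ P) (hc : c ∉ P) :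
    ∃ t ∈ P, b = c * t := by
  obtain ⟨t, ht | ht⟩ := PreValuationRing.cond c b
  · exact ⟨t, (‹P.IsPrime›.mem_or_mem (ht ▸ hb)).resolve_left hc, ht.symm⟩
  · exact absurd (ht ▸ P.mul_mem_right t hb) hc

theorem Polynomial.exists_eval_add_mul_eq_mul_eval {R : Type*} [CommRing R] (G : R[X]) (y t : R)
    (ht : G.eval y = (G.derivative.eval y) ^ 2 * t) :
    ∃ Q : R[X], ∀ z, G.eval (y + G.derivative.eval y * t * z) =
      (G.derivative.eval y) ^ 2 * t * (1 + X + C t * X ^ 2 * Q).eval z := by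
  obtain ⟨Q, hQ⟩ : ∃ Q, taylor y G = X * (X * Q + C (G.derivative.eval y)) + C (G.eval y) :=
    ⟨(taylor y G).divX.divX, by
      rw [← taylor_coeff_one, ← taylor_coeff_zero, ← coeff_divX, X_mul_divX_add,
        X_mul_divX_add]⟩
  refine ⟨Q.comp (C (G.derivative.eval y * t) * X), fun z => ?_⟩
  rw [add_comm y, ← taylor_eval, hQ, ht]
  simp only [eval_add, eval_mul, eval_X, eval_C, eval_pow, eval_one, eval_comp]
  ring

theorem HenselianLocalRing.exists_isRoot_of_map_residue_eq_one_add_X {R : Type*} [CommRing R]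
    [HenselianLocalRing R] {k : R[X]} (hk0 : k.coeff 0 = 1)
    (hk : k.map (residue R) = 1 + X) : ∃ a, k.IsRoot a := by
  have hdeg : 1 ≤ k.natDegree := by
    have := natDegree_map_le (f := residue R) (p := k)
    rwa [hk, add_comm, ← C_1, natDegree_X_add_C] at this
  have hmon : k.reverse.Monic := by
    rw [Monic, reverse_leadingCoeff, trailingCoeff_eq_coeff_zero (by simp [hk0]), hk0]
  have hrev : k.reverse.map (residue R) = X ^ (k.natDegree - 1) * (X + 1) := by
    rw [reverse, ← reflect_map, hk, reflect_add, reflect_one,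
      ← pow_one (X : (ResidueField R)[X]), reflect_monomial, revAt_le hdeg, mul_add, mul_one,
      ← pow_succ, Nat.sub_add_cancel hdeg]
    simp only [pow_one]
  have residue_eval : ∀ f : R[X], residue R (f.eval (-1)) = (f.map (residue R)).eval (-1) := by
    intro f
    rw [← eval_map_apply, map_neg, map_one]
  obtain ⟨b, hb, hb1⟩ := HenselianLocalRing.is_henselian k.reverse hmon (-1)
    (by rw [← residue_eq_zero_iff, residue_eval, hrev]; simp)
    (by
      rw [← residue_ne_zero_iff_isUnit, residue_eval, ← derivative_map, hrev]
      simp)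
  obtain ⟨u, rfl⟩ : IsUnit b := by
    rw [← residue_ne_zero_iff_isUnit]
    intro h
    simpa [h] using (residue_eq_zero_iff _).mpr hb1
  refine ⟨↑u⁻¹, ?_⟩
  have := (eval₂_reverse_eq_zero_iff (RingHom.id R) ((u⁻¹ : Rˣ) : R) k).mp
  rw [invOf_units, inv_inv] at this
  exact this hb

theorem PreValuationRing.exists_isRoot_sub_mem_of_eval_mem {V : Type*} [CommRing V]
    [PreValuationRing V] [HenselianLocalRing V] {P : Ideal V} [P.IsPrime] {G : V[X]} {y : V}
    (hb : G.eval y ∈ P) (he : G.derivative.eval y ∉ P) : ∃ x, G.IsRoot x ∧ x - y ∈ P := by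
  obtain ⟨t, htP, ht⟩ := exists_mem_eq_mul_of_mem_of_notMem hb
    fun h => he (Ideal.IsPrime.mem_of_pow_mem ‹_› 2 h)
  obtain ⟨Q, hQ⟩ := G.exists_eval_add_mul_eq_mul_eval y t ht
  have ht0 : residue V t = 0 :=
    (residue_eq_zero_iff t).mpr (le_maximalIdeal Ideal.IsPrime.ne_top' htP)
  obtain ⟨a, ha⟩ := HenselianLocalRing.exists_isRoot_of_map_residue_eq_one_add_X
    (k := 1 + X + C t * X ^ 2 * Q) (by simp) (by simp [ht0])
  refine ⟨y + G.derivative.eval y * t * a, ?_, ?_⟩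
  · rw [IsRoot, hQ, ha.eq_zero, mul_zero]
  · simpa using P.mul_mem_right a (P.mul_mem_left _ htP)

section FractionRing

variable {A B : Type*} [CommRing A] [IsDomain A] [CommRing B] [IsDomain B] {φ : A →+* B}

theorem Polynomial.eval₂_eq_zero_iff_map_dvd_map (hφ : Function.Injective φ) {g : A[X]}
    (hg : Irreducible (g.map (algebraMap A (FractionRing A)))) {x : B}
    (hx : g.eval₂ φ x = 0) (p : A[X]) :
    p.eval₂ φ x = 0 ↔
      g.map (algebraMap A (FractionRing A)) ∣ p.map (algebraMap A (FractionRing A)) := by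
  let ι := algebraMap B (FractionRing B)
  have hι : Function.Injective ι := IsFractionRing.injective B (FractionRing B)
  have hιφ : Function.Injective (ι.comp φ) := hι.comp hφ
  let ψ := IsFractionRing.lift (K := FractionRing A) hιφ
  have hψ : ψ.comp (algebraMap A (FractionRing A)) = ι.comp φ :=
    RingHom.ext fun a => IsFractionRing.lift_algebraMap (K := FractionRing A) hιφ a
  have eval_lift : ∀ q : A[X],
      (q.map (algebraMap A (FractionRing A))).eval₂ ψ (ι x) = ι (q.eval₂ φ x) := by
    intro q
    rw [eval₂_map, hom_eval₂, hψ]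
  have hgx := eval_lift g
  rw [hx, map_zero] at hgx
  constructor
  · intro hp
    refine (hg.isCoprime_or_dvd _).resolve_left fun ⟨a, b, hab⟩ => ?_
    have := congrArg (eval₂ ψ (ι x)) hab
    rw [eval₂_add, eval₂_mul, eval₂_mul, hgx, eval_lift, hp] at this
    simp at this
  · rintro ⟨q, hq⟩
    apply hι
    rw [← eval_lift, hq, eval₂_mul, hgx, zero_mul, map_zero]

theorem Polynomial.eval₂_derivative_ne_zero_of_separable (hφ : Function.Injective φ)
    {g : A[X]} (hg : Irreducible (g.map (algebraMap A (FractionRing A))))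
    (hsep : (g.map (algebraMap A (FractionRing A))).Separable) {x : B}
    (hx : g.eval₂ φ x = 0) : g.derivative.eval₂ φ x ≠ 0 := by
  rw [Ne, eval₂_eq_zero_iff_map_dvd_map hφ hg hx, ← derivative_map]
  exact fun h => hg.not_isUnit (hsep.isUnit_of_dvd' dvd_rfl h)

end FractionRing

theorem Subring.mem_closure_union_singleton {V : Type*} [CommRing V] {A : Subring V} {x w : V} :
    w ∈ Subring.closure ((A : Set V) ∪ {x}) ↔ ∃ p : A[X], p.eval₂ A.subtype x = w := by
  have : (A : Set V) = Set.range (algebraMap A V) := (Subtype.range_coe).symm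
  rw [this, ← Algebra.adjoin_eq_ring_closure, Subalgebra.mem_toSubring,
    Algebra.adjoin_singleton_eq_range_aeval]
  rfl

theorem RingHom.injOn_closure_union_singleton {V W : Type*} [CommRing V] [IsDomain V]
    [CommRing W] [IsDomain W] (f : V →+* W) {A : Subring V}
    (hA : Function.Injective (f.comp A.subtype)) {g : A[X]}
    (hg : Irreducible (g.map (algebraMap A (FractionRing A)))) {x : V}
    (hx : g.eval₂ A.subtype x = 0) : Set.InjOn f (Subring.closure ((A : Set V) ∪ {x})) := by
  intro u hu v hv huv
  obtain ⟨p, rfl⟩ := Subring.mem_closure_union_singleton.mp hu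
  obtain ⟨q, rfl⟩ := Subring.mem_closure_union_singleton.mp hv
  have hfx : g.eval₂ (f.comp A.subtype) (f x) = 0 := by rw [← hom_eval₂, hx, map_zero]
  rw [← sub_eq_zero, ← eval₂_sub, eval₂_eq_zero_iff_map_dvd_map A.subtype_injective hg hx,
    ← eval₂_eq_zero_iff_map_dvd_map hA hg hfx, eval₂_sub, ← hom_eval₂, ← hom_eval₂, huv,
    sub_self]

/-- Lifting lemma (Becker–Denef–Lipshitz–van den Dries / Moret-Bailly): let `V` be a
Henselian valuation ring, `P` a prime ideal of `V` with quotient map `π : V → V/P`, and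
`A ⊆ V` a subring on which `π` is injective.  Let `g ∈ A[X]` be irreducible and separable
over `Frac(A)`, and let `x ∈ V/P` be a root of `g` (via `π|_A`).  Then there is `x₁ ∈ V`
with `g(x₁) = 0` and `π(x₁) = x`; consequently the subring `A[x₁] ⊆ V` maps isomorphically
(bijectively) onto `A' = π(A)[x]` under `π`. -/
theorem lift_separable_root_henselian
    (V : Type*) [CommRing V] [IsDomain V] [ValuationRing V] [HenselianLocalRing V]
    (P : Ideal V) (hP : P.IsPrime)
    (A : Subring V)
    (hinj : ∀ a ∈ A, ∀ b ∈ A, Ideal.Quotient.mk P a = Ideal.Quotient.mk P b → a = b)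
    (g : Polynomial A)
    (hirr : Irreducible (g.map (algebraMap A (FractionRing A))))
    (hsep : (g.map (algebraMap A (FractionRing A))).Separable)
    (x : V ⧸ P)
    (hx : Polynomial.eval₂ ((Ideal.Quotient.mk P).comp A.subtype) x g = 0) :
    ∃ x₁ : V, Polynomial.eval₂ A.subtype x₁ g = 0 ∧ Ideal.Quotient.mk P x₁ = x ∧
      (Subring.closure ((A : Set V) ∪ {x₁})).map (Ideal.Quotient.mk P)
        = Subring.closure ((A.map (Ideal.Quotient.mk P) : Set (V ⧸ P)) ∪ {x}) ∧
      Set.InjOn (Ideal.Quotient.mk P) (Subring.closure ((A : Set V) ∪ {x₁})) := by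
  set π := Ideal.Quotient.mk P
  have hφ : Function.Injective (π.comp A.subtype) := fun a b h =>
    Subtype.ext (hinj a a.2 b b.2 h)
  have π_eval : ∀ (p : A[X]) (v : V),
      π ((p.map A.subtype).eval v) = p.eval₂ (π.comp A.subtype) (π v) := fun p v => by
    rw [eval_map, hom_eval₂]
  obtain ⟨y, rfl⟩ := Ideal.Quotient.mk_surjective x
  obtain ⟨x₁, hx₁, hx₁y⟩ := PreValuationRing.exists_isRoot_sub_mem_of_eval_mem (P := P)
    (G := g.map A.subtype) (y := y)
    (by rw [← Ideal.Quotient.eq_zero_iff_mem, π_eval, hx])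
    (by rw [← Ideal.Quotient.eq_zero_iff_mem, derivative_map, π_eval]
        exact eval₂_derivative_ne_zero_of_separable hφ hirr hsep hx)
  have hroot : g.eval₂ A.subtype x₁ = 0 := by rwa [IsRoot, eval_map] at hx₁
  have hπx₁ : π x₁ = π y := Ideal.Quotient.eq.mpr hx₁y
  refine ⟨x₁, hroot, hπx₁, ?_, π.injOn_closure_union_singleton hφ hirr hroot⟩
  rw [RingHom.map_closure, Set.image_union, Set.image_singleton, hπx₁, ← Subring.coe_map]
end

section
/- Let R be a complete valuation ring with fraction field K and value group Γ, K₁/K a finite extension of degree d with valuation ord₁ extending ord and value group Γ₁. Let R₀ ⊆ K₁ be a finite R-subalgebra with fraction field K₁, free over R with basis (e₁ = 1, e₂, …, e_d). Define ord₀(∑ xᵢeᵢ) = minᵢ ord(xᵢ) for xᵢ ∈ K. Then the function ord₁ − ord₀ : K₁* → Γ₁ is bounded: there exist γ, γ' ∈ Γ₁ such that γ ≤ ord₁(z) − ord₀(z) ≤ γ' for all z ∈ K₁*. -/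
/-!
The upper bound is the ultrametric inequality, the basis vectors being integral. For the lower
bound one shows, by induction on `n`, that the coordinates of a linearly independent family
`e : Fin n → K₁` are bounded by a constant multiple of `v₁ (∑ xⱼ • eⱼ)`. In the inductive step each
`eᵢ` keeps a positive distance from the span of the other vectors: otherwise a net in that span
approaching `-eᵢ` has Cauchy coordinates (by the induction hypothesis), and their limits in the
complete field `K` would express `eᵢ` through the others. Passing back from convergence in `K` to
convergence in `K₁` needs `f Γ₀` to be cofinal in `Γ₁`; this holds because `Γ₁ / f Γ₀` is torsion,
the powers `1, z, …, z ^ d` being linearly dependent.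
-/

open Finset Filter Topology

theorem Valuation.exists_ne_map_eq_of_sum_eq_zero {R Γ ι : Type*} [Ring R]
    [LinearOrderedCommMonoidWithZero Γ] (v : Valuation R Γ) {s : Finset ι} {a : ι → R}
    (hsum : ∑ i ∈ s, a i = 0) {i₀ : ι} (hi₀ : i₀ ∈ s) (ha : v (a i₀) ≠ 0) :
    ∃ i ∈ s, ∃ j ∈ s, i ≠ j ∧ v (a i) ≠ 0 ∧ v (a i) = v (a j) := by
  classical
  obtain ⟨i, hi, hmax⟩ := s.exists_max_image (v ∘ a) ⟨i₀, hi₀⟩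
  have hi0 : v (a i) ≠ 0 := ((zero_lt_iff.2 ha).trans_le (hmax i₀ hi₀)).ne'
  by_contra! hne
  have hlt : ∀ j ∈ s \ {i}, v (a j) < v (a i) := fun j hj => by
    rw [Finset.mem_sdiff, Finset.mem_singleton] at hj
    exact (hmax j hj.1).lt_of_ne (hne i hi j hj.1 (Ne.symm hj.2) hi0).symm
  exact hi0 (by rw [← v.map_sum_eq_of_lt hi hlt, hsum, v.map_zero])

section ValuationExtension

variable {K K₁ Γ₀ Γ₁ : Type*} [Field K] [Field K₁] [Algebra K K₁]
  [LinearOrderedCommGroupWithZero Γ₀] [LinearOrderedCommGroupWithZero Γ₁]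
  {v : Valuation K Γ₀} {v₁ : Valuation K₁ Γ₁} {f : Γ₀ →*₀ Γ₁}

theorem valuation_smul (hext : ∀ x : K, v₁ (algebraMap K K₁ x) = f (v x)) (x : K) (z : K₁) :
    v₁ (x • z) = f (v x) * v₁ z := by
  rw [Algebra.smul_def, map_mul, hext]

theorem exists_pos_pow_eq_map_valuation [FiniteDimensional K K₁]
    (hext : ∀ x : K, v₁ (algebraMap K K₁ x) = f (v x)) {z : K₁} (hz : z ≠ 0) :
    ∃ k, 0 < k ∧ ∃ x : K, f (v x) = v₁ z ^ k := by
  have hdep : ¬LinearIndependent K fun i : Fin (Module.finrank K K₁ + 1) => z ^ (i : ℕ) :=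
    fun hli => by simpa using hli.fintype_card_le_finrank
  obtain ⟨g, hg, i₀, hi₀⟩ := Fintype.not_linearIndependent_iff.1 hdep
  have hval : ∀ i, v₁ (g i • z ^ (i : ℕ)) = f (v (g i)) * v₁ z ^ (i : ℕ) := fun i => by
    rw [valuation_smul hext, map_pow]
  obtain ⟨i, -, j, -, hij, hi0, heq⟩ := v₁.exists_ne_map_eq_of_sum_eq_zero hg (mem_univ i₀)
    (by simp [hval, hi₀, hz])
  simp only [hval] at heq hi0
  have hv0 : v₁ z ≠ 0 := v₁.ne_zero_iff.2 hz
  wlog hlt : i < j generalizing i j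
  · exact this j i hij.symm heq.symm (heq ▸ hi0) ((Ne.symm hij).lt_of_le (not_lt.1 hlt))
  refine ⟨j - i, Nat.sub_pos_of_lt hlt, g i / g j, ?_⟩
  have hgj : f (v (g j)) ≠ 0 := fun h => hi0 (by rw [heq, h, zero_mul])
  rw [map_div₀, map_div₀, div_eq_iff hgj]
  refine mul_right_cancel₀ (pow_ne_zero i hv0) ?_
  rw [heq, mul_right_comm, ← pow_add, Nat.sub_add_cancel hlt.le, mul_comm]

theorem exists_map_le [FiniteDimensional K K₁]
    (hext : ∀ x : K, v₁ (algebraMap K K₁ x) = f (v x))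
    (hsurj₁ : ∀ γ : Γ₁ˣ, ∃ z : K₁, v₁ z = γ) (t : Γ₁ˣ) : ∃ ε : Γ₀ˣ, f ε ≤ t := by
  rcases le_or_gt 1 (t : Γ₁) with ht | ht
  · exact ⟨1, by simpa using ht⟩
  obtain ⟨z, hz⟩ := hsurj₁ t
  obtain ⟨k, hk, x, hx⟩ := exists_pos_pow_eq_map_valuation hext (v₁.ne_zero_iff.1 (hz ▸ t.ne_zero))
  have hx0 : v x ≠ 0 := fun h => pow_ne_zero k t.ne_zero (by rw [← hz, ← hx, h, map_zero])
  refine ⟨Units.mk0 _ hx0, ?_⟩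
  rw [Units.val_mk0, hx, hz]
  exact pow_le_of_le_one zero_le ht.le hk.ne'

theorem valuation_sum_smul_le {ι : Type*} [Fintype ι]
    (hext : ∀ x : K, v₁ (algebraMap K K₁ x) = f (v x)) {e : ι → K₁} (he : ∀ j, v₁ (e j) ≤ 1)
    {x : ι → K} {g : Γ₁} (hx : ∀ j, f (v (x j)) ≤ g) : v₁ (∑ j, x j • e j) ≤ g :=
  v₁.map_sum_le fun j _ => by
    rw [valuation_smul hext]
    exact mul_le_of_le_of_le_one (hx j) (he j)

theorem exists_valuation_sum_smul_lt {ι : Type*} [Fintype ι] (hf : StrictMono f)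
    (hext : ∀ x : K, v₁ (algebraMap K K₁ x) = f (v x)) (hcof : ∀ t : Γ₁ˣ, ∃ ε : Γ₀ˣ, f ε ≤ t)
    (e : ι → K₁) (γ : Γ₁ˣ) :
    ∃ ε : Γ₀ˣ, ∀ x : ι → K, (∀ j, v (x j) < ε) → v₁ (∑ j, x j • e j) < γ := by
  have hterm : ∀ j, ∃ ε : Γ₀ˣ, ∀ y : K, v y < ε → v₁ (y • e j) < γ := fun j => by
    by_cases he : v₁ (e j) = 0
    · exact ⟨1, fun y _ => by simp [valuation_smul hext, he]⟩
    obtain ⟨ε, hε⟩ := hcof (γ * (Units.mk0 _ he)⁻¹)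
    refine ⟨ε, fun y hy => ?_⟩
    calc v₁ (y • e j) = f (v y) * v₁ (e j) := valuation_smul hext y (e j)
      _ < f ε * v₁ (e j) := mul_lt_mul_of_pos_right (hf hy) (zero_lt_iff.2 he)
      _ ≤ (γ * (Units.mk0 _ he)⁻¹ : Γ₁ˣ) * v₁ (e j) := mul_le_mul_left hε _
      _ = γ := by simp [he]
  choose ε hε using hterm
  obtain ⟨ε₀, hε₀⟩ := (Set.finite_range ε).bddBelow
  exact ⟨ε₀, fun x hx => v₁.map_sum_lt γ.ne_zero fun j _ =>
    hε j (x j) ((hx j).trans_le (Units.val_le_val.2 (hε₀ ⟨j, rfl⟩)))⟩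

end ValuationExtension

section Complete

variable {K K₁ Γ₀ Γ₁ : Type*} [Field K] [Field K₁] [Algebra K K₁]
  [LinearOrderedCommGroupWithZero Γ₀] [LinearOrderedCommGroupWithZero Γ₁] [Valued K Γ₀]
  {v₁ : Valuation K₁ Γ₁} {f : Γ₀ →*₀ Γ₁}

theorem Valued.eventually_valuation_sub_lt (hsurj : ∀ γ : Γ₀ˣ, ∃ x : K, Valued.v x = γ) (a : K)
    (ε : Γ₀ˣ) : ∀ᶠ x in 𝓝 a, Valued.v (x - a) < ε := by
  obtain ⟨x₀, hx₀⟩ := hsurj ε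
  have h0 : Valued.v.restrict x₀ ≠ 0 := by simpa using Valued.v.ne_zero_iff.1 (hx₀ ▸ ε.ne_zero)
  refine Valued.mem_nhds.2 ⟨Units.mk0 _ h0, fun y hy => ?_⟩
  rw [Set.mem_ofPred_eq, ← hx₀]
  exact Valued.v.restrict_lt_iff.1 hy

theorem cauchy_map_apply {ι : Type*} [Fintype ι] (hf : StrictMono f) {e : ι → K₁} {c : Γ₁ˣ}
    (hc : ∀ (x : ι → K) i, f (Valued.v (x i)) ≤ c * v₁ (∑ j, x j • e j))
    {F : Filter (ι → K)} [F.NeBot]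
    (hF : ∀ δ : Γ₁ˣ, ∃ M ∈ F, ∀ y ∈ M, ∀ y' ∈ M, v₁ (∑ j, (y' j - y j) • e j) < δ) (i : ι) :
    Cauchy (F.map fun y => y i) := by
  refine Valued.cauchy_iff.2 ⟨inferInstance, fun γ => ?_⟩
  set γ₀ := MonoidWithZeroHom.ValueGroup₀.embedding γ.1
  have hγ₀ : f γ₀ ≠ 0 := (map_ne_zero f).2 ((map_ne_zero _).2 γ.ne_zero)
  obtain ⟨M, hM, hMδ⟩ := hF (c⁻¹ * Units.mk0 _ hγ₀)
  refine ⟨_, image_mem_map hM, ?_⟩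
  rintro _ ⟨y, hy, rfl⟩ _ ⟨y', hy', rfl⟩
  rw [Valuation.restrict_lt_iff_lt_embedding, ← hf.lt_iff_lt]
  calc f (Valued.v (y' i - y i)) ≤ c * v₁ (∑ j, (y' j - y j) • e j) := hc (y' - y) i
    _ < c * (c⁻¹ * Units.mk0 _ hγ₀ : Γ₁ˣ) := mul_lt_mul_of_pos_left (hMδ y hy y' hy') c.zero_lt
    _ = f γ₀ := by simp

theorem exists_le_valuation_add_sum_smul [CompleteSpace K] {ι : Type*} [Fintype ι]
    (hsurj : ∀ γ : Γ₀ˣ, ∃ x : K, Valued.v x = γ) (hf : StrictMono f)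
    (hext : ∀ x : K, v₁ (algebraMap K K₁ x) = f (Valued.v x))
    (hcof : ∀ t : Γ₁ˣ, ∃ ε : Γ₀ˣ, f ε ≤ t) {e : ι → K₁} {c : Γ₁ˣ}
    (hc : ∀ (x : ι → K) i, f (Valued.v (x i)) ≤ c * v₁ (∑ j, x j • e j))
    {u : K₁} (hu : u ∉ Submodule.span K (Set.range e)) :
    ∃ δ : Γ₁ˣ, ∀ y : ι → K, δ ≤ v₁ (u + ∑ j, y j • e j) := by
  by_contra! hsmall
  choose y hy using hsmall
  have hev : ∀ δ : Γ₁ˣ, ∀ᶠ δ' in atBot, v₁ (u + ∑ j, y δ' j • e j) < δ := fun δ =>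
    (eventually_le_atBot δ).mono fun δ' h => (hy δ').trans_le (Units.val_le_val.2 h)
  have hcauchy : ∀ i, Cauchy ((map y atBot).map fun y => y i) := cauchy_map_apply hf hc
    fun δ => ⟨_, hev δ, fun y₁ h₁ y₂ h₂ => by
      have hdiff : ∑ j, (y₂ j - y₁ j) • e j = (u + ∑ j, y₂ j • e j) - (u + ∑ j, y₁ j • e j) := by
        simp only [sub_smul, sum_sub_distrib]; abel
      exact hdiff ▸ (v₁.map_sub _ _).trans_lt (max_lt h₂ h₁)⟩
  choose a ha using fun i => CompleteSpace.complete (hcauchy i)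
  have hw : u + ∑ j, a j • e j ≠ 0 := fun h => hu <|
    (Submodule.mem_span_range_iff_exists_fun K).2 ⟨-a, by simp [eq_neg_of_add_eq_zero_left h]⟩
  obtain ⟨ε, hε⟩ := exists_valuation_sum_smul_lt hf hext hcof e (Units.mk0 _ (v₁.ne_zero_iff.2 hw))
  have hclose : ∀ᶠ δ in atBot, ∀ j, Valued.v (y δ j - a j) < ε :=
    eventually_all.2 fun j => ha j (Valued.eventually_valuation_sub_lt hsurj (a j) ε)
  obtain ⟨δ, hδ, hδ'⟩ := ((hev _).and hclose).exists
  have hdiff : (u + ∑ j, y δ j • e j) - ∑ j, (y δ j - a j) • e j = u + ∑ j, a j • e j := by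
    simp only [sub_smul, sum_sub_distrib]; abel
  have := hdiff ▸ v₁.map_sub (u + ∑ j, y δ j • e j) (∑ j, (y δ j - a j) • e j)
  exact (this.trans_lt (max_lt hδ (hε _ hδ'))).false

theorem exists_map_valuation_le_of_notMem_span [CompleteSpace K] {ι : Type*} [Fintype ι]
    (hsurj : ∀ γ : Γ₀ˣ, ∃ x : K, Valued.v x = γ) (hf : StrictMono f)
    (hext : ∀ x : K, v₁ (algebraMap K K₁ x) = f (Valued.v x))
    (hcof : ∀ t : Γ₁ˣ, ∃ ε : Γ₀ˣ, f ε ≤ t) {e : ι → K₁} {c : Γ₁ˣ}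
    (hc : ∀ (x : ι → K) i, f (Valued.v (x i)) ≤ c * v₁ (∑ j, x j • e j))
    {u : K₁} (hu : u ∉ Submodule.span K (Set.range e)) :
    ∃ δ : Γ₁ˣ, ∀ (t : K) (x : ι → K), f (Valued.v t) ≤ δ * v₁ (t • u + ∑ j, x j • e j) := by
  obtain ⟨δ, hδ⟩ := exists_le_valuation_add_sum_smul hsurj hf hext hcof hc hu
  refine ⟨δ⁻¹, fun t x => ?_⟩
  rcases eq_or_ne t 0 with rfl | ht
  · simp
  have hfactor : t • u + ∑ j, x j • e j = t • (u + ∑ j, (t⁻¹ * x j) • e j) := by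
    simp only [smul_add, smul_sum, smul_smul, mul_inv_cancel_left₀ ht]
  rw [hfactor, valuation_smul hext, Units.le_inv_mul_iff, mul_comm]
  exact mul_le_mul_right (hδ _) _

theorem exists_map_valuation_le_mul_valuation_sum [CompleteSpace K]
    (hsurj : ∀ γ : Γ₀ˣ, ∃ x : K, Valued.v x = γ) (hf : StrictMono f)
    (hext : ∀ x : K, v₁ (algebraMap K K₁ x) = f (Valued.v x))
    (hcof : ∀ t : Γ₁ˣ, ∃ ε : Γ₀ˣ, f ε ≤ t) :
    ∀ {n : ℕ} {e : Fin n → K₁}, LinearIndependent K e →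
      ∃ c : Γ₁ˣ, ∀ (x : Fin n → K) i, f (Valued.v (x i)) ≤ c * v₁ (∑ j, x j • e j)
  | 0, _, _ => ⟨1, fun _ i => i.elim0⟩
  | n + 1, e, he => by
    have hcoord : ∀ i : Fin (n + 1), ∃ δ : Γ₁ˣ, ∀ (t : K) (x : Fin n → K),
        f (Valued.v t) ≤ δ * v₁ (t • e i + ∑ j, x j • e (i.succAbove j)) := fun i => by
      obtain ⟨c, hc⟩ := exists_map_valuation_le_mul_valuation_sum hsurj hf hext hcof
        (he.comp _ Fin.succAbove_right_injective)
      refine exists_map_valuation_le_of_notMem_span hsurj hf hext hcof hc ?_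
      rw [Set.range_comp]
      exact he.notMem_span_image (by simp [Fin.range_succAbove])
    choose δ hδ using hcoord
    obtain ⟨c, hc⟩ := (Set.finite_range δ).bddAbove
    refine ⟨c, fun x i => ?_⟩
    rw [Fin.sum_univ_succAbove _ i]
    exact (hδ i (x i) _).trans (mul_le_mul_left (Units.val_le_val.2 (hc ⟨i, rfl⟩)) _)

end Complete

theorem ord_one_sub_ord_zero_bounded_general
    (K : Type*) [Field K] (Γ₀ : Type*) [LinearOrderedCommGroupWithZero Γ₀]
    [Valued K Γ₀] [CompleteSpace K]
    (hsurj : ∀ γ : Γ₀ˣ, ∃ x : K, Valued.v x = (γ : Γ₀))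
    (K₁ : Type*) [Field K₁] [Algebra K K₁] [FiniteDimensional K K₁]
    (hd : 0 < Module.finrank K K₁)
    (Γ₁ : Type*) [LinearOrderedCommGroupWithZero Γ₁]
    (f : Γ₀ →*₀ Γ₁) (hf : StrictMono f)
    (v₁ : Valuation K₁ Γ₁)
    (hext : ∀ x : K, v₁ (algebraMap K K₁ x) = f (Valued.v x))
    (hsurj₁ : ∀ γ : Γ₁ˣ, ∃ x : K₁, v₁ x = (γ : Γ₁))
    (b : Module.Basis (Fin (Module.finrank K K₁)) K K₁)
    (hbint : ∀ i, v₁ (b i) ≤ 1) :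
    ∃ γlo γhi : Γ₁ˣ, ∀ z : K₁, z ≠ 0 →
      (γlo : Γ₁) * (Finset.univ.sup' ⟨⟨0, hd⟩, Finset.mem_univ _⟩ (fun i => f (Valued.v (b.repr z i)))) ≤ v₁ z ∧
      v₁ z ≤ (γhi : Γ₁) * (Finset.univ.sup' ⟨⟨0, hd⟩, Finset.mem_univ _⟩ (fun i => f (Valued.v (b.repr z i)))) := by
  obtain ⟨c, hc⟩ := exists_map_valuation_le_mul_valuation_sum hsurj hf hext
    (exists_map_le hext hsurj₁) b.linearIndependent
  refine ⟨c⁻¹, 1, fun z _ => ⟨?_, ?_⟩⟩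
  · rw [Units.inv_mul_le_iff]
    refine Finset.sup'_le _ _ fun i _ => ?_
    simpa only [b.sum_repr] using hc (b.repr z) i
  · rw [Units.val_one, one_mul]
    conv_lhs => rw [← b.sum_repr z]
    exact valuation_sum_smul_le hext hbint fun j =>
      Finset.le_sup' (fun i => f (Valued.v (b.repr z i))) (mem_univ j)

/-- Let `K` be a field complete for a valuation with value group `Γ₀ˣ`, `K₁/K` a finite
extension of degree `d` with valuation `v₁` extending the one on `K` (via `f`), and let
`(e₁ = 1, e₂, …, e_d)` be a `K`-basis of `K₁` consisting of elements of the valuation ring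
of `v₁` (e.g. an `R`-basis of `R₀ = R[ℬ]`).  Defining `ord₀(∑ xᵢeᵢ) = minᵢ ord(xᵢ)`
(multiplicatively: `v₀ z = maxᵢ v(xᵢ)`), the function `ord₁ − ord₀` is bounded on `K₁*`:
there are `γ, γ' ∈ Γ₁ˣ` with `γ·v₀(z) ≤ v₁(z) ≤ γ'·v₀(z)` for all `z ≠ 0`. -/
theorem ord_one_sub_ord_zero_bounded
    (K : Type*) [Field K] (Γ₀ : Type*) [LinearOrderedCommGroupWithZero Γ₀]
    [Valued K Γ₀] [CompleteSpace K]
    (hsurj : ∀ γ : Γ₀ˣ, ∃ x : K, Valued.v x = (γ : Γ₀))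
    (K₁ : Type*) [Field K₁] [Algebra K K₁] [FiniteDimensional K K₁]
    (hd : 0 < Module.finrank K K₁)
    (Γ₁ : Type*) [LinearOrderedCommGroupWithZero Γ₁]
    (f : Γ₀ →*₀ Γ₁) (hf : StrictMono f)
    (v₁ : Valuation K₁ Γ₁)
    (hext : ∀ x : K, v₁ (algebraMap K K₁ x) = f (Valued.v x))
    (hsurj₁ : ∀ γ : Γ₁ˣ, ∃ x : K₁, v₁ x = (γ : Γ₁))
    (b : Module.Basis (Fin (Module.finrank K K₁)) K K₁)
    (hb1 : b ⟨0, hd⟩ = 1)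
    (hbint : ∀ i, v₁ (b i) ≤ 1) :
    ∃ γlo γhi : Γ₁ˣ, ∀ z : K₁, z ≠ 0 →
      (γlo : Γ₁) * (Finset.univ.sup' ⟨⟨0, hd⟩, Finset.mem_univ _⟩ (fun i => f (Valued.v (b.repr z i)))) ≤ v₁ z ∧
      v₁ z ≤ (γhi : Γ₁) * (Finset.univ.sup' ⟨⟨0, hd⟩, Finset.mem_univ _⟩ (fun i => f (Valued.v (b.repr z i)))) :=
  ord_one_sub_ord_zero_bounded_general K Γ₀ hsurj K₁ hd Γ₁ f hf v₁ hext hsurj₁ b hbint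
end

section
/- Let R be a valuation ring, W an infinite set with nonprincipal ultrafilter 𝒰, Rᵤ the ultrapower of R, Γᵤ the ultrapower of the value group Γ. Let αᵤ ∈ Γᵤ⁺ be represented by a family (α_w) ∈ (Γ⁺)^W. Then the canonical surjection R^W → ∏_{w∈W} R/I_{α_w} induces a ring isomorphism Rᵤ/I_{αᵤ} ≅ ulim_{𝒰,w} R/I_{α_w}, where I_{αᵤ} = {x ∈ Rᵤ | ordᵤ(x) ≥ αᵤ} and the right side is the ultraproduct of the quotients R/I_{α_w}. -/
open Filter

section Setup

variable {R : Type*} [CommRing R] [IsDomain R] [ValuationRing R]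
  {Γ : Type*} [AddCommGroup Γ] [LinearOrder Γ] [IsOrderedAddMonoid Γ]

/-- The ideal `I_γ = {x ∈ R | ord x ≥ γ}` of a valuation ring `R` with (nonnegative)
additive valuation `v`. -/
def valIdeal (v : AddValuation R (WithTop Γ)) (hnn : ∀ x : R, 0 ≤ v x) (γ : Γ) :
    Ideal R where
  carrier := {x | (γ : WithTop Γ) ≤ v x}
  zero_mem' := by simp [v.map_zero]
  add_mem' := by
    intro a b ha hb
    exact le_trans (le_min ha hb) (v.map_add a b)
  smul_mem' := by
    intro c x hx
    have h : v (c * x) = v c + v x := v.map_mul c x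
    have : (γ : WithTop Γ) ≤ v c + v x := le_add_of_nonneg_left (hnn c) |>.trans' hx
    simpa [smul_eq_mul, h] using this

variable {W : Type*} (𝒰 : Ultrafilter W)

/-- The ideal of families vanishing `𝒰`-almost everywhere, defining the ultraproduct
of the family of rings `(Q w)`. -/
def aeZeroIdeal (Q : W → Type*) [∀ w, CommRing (Q w)] : Ideal (Π w, Q w) where
  carrier := {f | ∀ᶠ w in (𝒰 : Filter W), f w = 0}
  zero_mem' := Eventually.of_forall fun _ => rfl
  add_mem' := fun ha hb => (ha.and hb).mono fun _ h => by simp [h.1, h.2]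
  smul_mem' := fun c _ h => h.mono fun _ hw => by simp [hw]

/-- The ideal `I_{αᵤ} = {x ∈ Rᵤ | ordᵤ x ≥ αᵤ}` of the ultrapower `Rᵤ`, where
`αᵤ = [α_w]` is given by the family `(α_w)`. -/
def germValIdeal (v : AddValuation R (WithTop Γ)) (hnn : ∀ x : R, 0 ≤ v x) (α : W → Γ) :
    Ideal (Germ (𝒰 : Filter W) R) where
  carrier := {x | ∃ f : W → R, x = (↑f : Germ (𝒰 : Filter W) R) ∧
    ∀ᶠ w in (𝒰 : Filter W), (α w : WithTop Γ) ≤ v (f w)}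
  zero_mem' := ⟨0, by simp, Eventually.of_forall fun w => by simp [v.map_zero]⟩
  add_mem' := by
    rintro a b ⟨f, rfl, hf⟩ ⟨g, rfl, hg⟩
    exact ⟨f + g, by simp, (hf.and hg).mono fun w h =>
      le_trans (le_min h.1 h.2) (v.map_add (f w) (g w))⟩
  smul_mem' := by
    intro c x hx
    induction c using Filter.Germ.inductionOn with
    | h h =>
      obtain ⟨f, rfl, hf⟩ := hx
      refine ⟨h * f, by simp, hf.mono fun w hw => ?_⟩
      have hmul : v (h w * f w) = v (h w) + v (f w) := v.map_mul _ _
      have : (α w : WithTop Γ) ≤ v (h w) + v (f w) :=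
        (le_add_of_nonneg_left (hnn (h w))).trans' hw
      simpa [hmul] using this

end Setup

/-! Both rings are quotients of `R^W` by the ideal of families `f` with `f w ∈ I_{α_w}` for
`𝒰`-almost all `w`. The canonical map `R^W → ulim R/I_{α_w}` is surjective and kills families
that vanish `𝒰`-almost everywhere, so it descends to a surjection from `Rᵤ`, whose kernel is
`I_{αᵤ}`. -/

namespace Filter.Germ

variable {W R S : Type*} [Semiring R] [Semiring S] {l : Filter W}

def liftRingHom (φ : (W → R) →+* S) (hφ : ∀ f g : W → R, f =ᶠ[l] g → φ f = φ g) :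
    Germ l R →+* S where
  toFun x := x.liftOn φ hφ
  map_one' := map_one φ
  map_zero' := map_zero φ
  map_mul' x y := inductionOn₂ x y fun f g => map_mul φ f g
  map_add' x y := inductionOn₂ x y fun f g => map_add φ f g

theorem liftRingHom_surjective {φ : (W → R) →+* S}
    (hφ : ∀ f g : W → R, f =ᶠ[l] g → φ f = φ g) (hsurj : Function.Surjective φ) :
    Function.Surjective (liftRingHom φ hφ) := fun y =>
  let ⟨f, hf⟩ := hsurj y
  ⟨f, hf⟩

end Filter.Germ

section Ultraproduct

variable {W R : Type*} [CommRing R] (𝒰 : Ultrafilter W) (I : W → Ideal R)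

def ultraproductMk : (W → R) →+* (Π w, R ⧸ I w) ⧸ aeZeroIdeal 𝒰 (fun w => R ⧸ I w) :=
  (Ideal.Quotient.mk _).comp
    (RingHom.pi fun w => (Ideal.Quotient.mk (I w)).comp (Pi.evalRingHom _ w))

theorem ultraproductMk_apply (f : W → R) :
    ultraproductMk 𝒰 I f = Ideal.Quotient.mk _ (fun w => Ideal.Quotient.mk (I w) (f w)) :=
  rfl

theorem ultraproductMk_eq_zero_iff {f : W → R} :
    ultraproductMk 𝒰 I f = 0 ↔ ∀ᶠ w in (𝒰 : Filter W), f w ∈ I w := by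
  rw [ultraproductMk_apply, Ideal.Quotient.eq_zero_iff_mem]
  exact eventually_congr (Eventually.of_forall fun w => Ideal.Quotient.eq_zero_iff_mem)

theorem ultraproductMk_congr {f g : W → R} (h : f =ᶠ[(𝒰 : Filter W)] g) :
    ultraproductMk 𝒰 I f = ultraproductMk 𝒰 I g := by
  rw [← sub_eq_zero, ← map_sub, ultraproductMk_eq_zero_iff]
  exact h.mono fun w hw => by simp [hw]

theorem ultraproductMk_surjective : Function.Surjective (ultraproductMk 𝒰 I) := by
  intro y
  obtain ⟨q, rfl⟩ := Ideal.Quotient.mk_surjective y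
  choose f hf using fun w => Ideal.Quotient.mk_surjective (q w)
  exact ⟨f, congrArg _ (funext hf)⟩

def ultrapowerToUltraproduct :
    Germ (𝒰 : Filter W) R →+* (Π w, R ⧸ I w) ⧸ aeZeroIdeal 𝒰 (fun w => R ⧸ I w) :=
  Germ.liftRingHom (ultraproductMk 𝒰 I) fun _ _ => ultraproductMk_congr 𝒰 I

theorem ultrapowerToUltraproduct_surjective :
    Function.Surjective (ultrapowerToUltraproduct 𝒰 I) :=
  Germ.liftRingHom_surjective _ (ultraproductMk_surjective 𝒰 I)

theorem coe_mem_ker_ultrapowerToUltraproduct_iff {f : W → R} :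
    (f : Germ (𝒰 : Filter W) R) ∈ RingHom.ker (ultrapowerToUltraproduct 𝒰 I) ↔
      ∀ᶠ w in (𝒰 : Filter W), f w ∈ I w :=
  ultraproductMk_eq_zero_iff 𝒰 I

end Ultraproduct

section Valuation

variable {R : Type*} [CommRing R]
  {Γ : Type*} [AddCommGroup Γ] [LinearOrder Γ] [IsOrderedAddMonoid Γ]
  {v : AddValuation R (WithTop Γ)} {hnn : ∀ x : R, 0 ≤ v x} {W : Type*} (𝒰 : Ultrafilter W)

theorem coe_mem_germValIdeal_iff {α : W → Γ} {f : W → R} :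
    (f : Germ (𝒰 : Filter W) R) ∈ germValIdeal 𝒰 v hnn α ↔
      ∀ᶠ w in (𝒰 : Filter W), f w ∈ valIdeal v hnn (α w) := by
  refine ⟨fun ⟨g, hfg, hg⟩ => ?_, fun h => ⟨f, rfl, h⟩⟩
  exact ((Germ.coe_eq.1 hfg).and hg).mono fun w ⟨hw, hgw⟩ => hw ▸ hgw

theorem germValIdeal_eq_ker (α : W → Γ) :
    germValIdeal 𝒰 v hnn α =
      RingHom.ker (ultrapowerToUltraproduct 𝒰 fun w => valIdeal v hnn (α w)) := by
  ext x
  induction x using Germ.inductionOn with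
  | h f => rw [coe_mem_germValIdeal_iff, coe_mem_ker_ultrapowerToUltraproduct_iff]

end Valuation

theorem germ_quotient_iso_ultraproduct_of_quotients_general
    (R : Type*) [CommRing R]
    (Γ : Type*) [AddCommGroup Γ] [LinearOrder Γ] [IsOrderedAddMonoid Γ]
    (v : AddValuation R (WithTop Γ)) (hnn : ∀ x : R, 0 ≤ v x)
    (W : Type*) (𝒰 : Ultrafilter W)
    (α : W → Γ) :
    ∃ e : (Germ (𝒰 : Filter W) R ⧸ germValIdeal 𝒰 v hnn α) ≃+*
        ((Π w, R ⧸ valIdeal v hnn (α w)) ⧸ aeZeroIdeal 𝒰 (fun w => R ⧸ valIdeal v hnn (α w))),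
      ∀ f : W → R,
        e (Ideal.Quotient.mk (germValIdeal 𝒰 v hnn α) (↑f : Germ (𝒰 : Filter W) R)) =
          Ideal.Quotient.mk _ (fun w => Ideal.Quotient.mk (valIdeal v hnn (α w)) (f w)) :=
  ⟨(Ideal.quotEquivOfEq (germValIdeal_eq_ker 𝒰 α)).trans
      (RingHom.quotientKerEquivOfSurjective (ultrapowerToUltraproduct_surjective 𝒰 _)),
    fun _ => rfl⟩

/-- Moret-Bailly, 2.3.1: for a valuation ring `R` with additive valuation `v` and a family
`(α_w)` of nonnegative values representing `αᵤ ∈ Γᵤ⁺`, the canonical surjection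
`R^W → ∏_w R/I_{α_w}` induces a ring isomorphism `Rᵤ/I_{αᵤ} ≅ ulim_w R/I_{α_w}`. -/
theorem germ_quotient_iso_ultraproduct_of_quotients
    (R : Type*) [CommRing R] [IsDomain R] [ValuationRing R]
    (Γ : Type*) [AddCommGroup Γ] [LinearOrder Γ] [IsOrderedAddMonoid Γ]
    (v : AddValuation R (WithTop Γ)) (hnn : ∀ x : R, 0 ≤ v x)
    (W : Type*) [Infinite W] (𝒰 : Ultrafilter W) (h𝒰 : ∀ w : W, 𝒰 ≠ pure w)
    (α : W → Γ) (hα : ∀ w, 0 ≤ α w) :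
    ∃ e : (Germ (𝒰 : Filter W) R ⧸ germValIdeal 𝒰 v hnn α) ≃+*
        ((Π w, R ⧸ valIdeal v hnn (α w)) ⧸ aeZeroIdeal 𝒰 (fun w => R ⧸ valIdeal v hnn (α w))),
      ∀ f : W → R,
        e (Ideal.Quotient.mk (germValIdeal 𝒰 v hnn α) (↑f : Germ (𝒰 : Filter W) R)) =
          Ideal.Quotient.mk _ (fun w => Ideal.Quotient.mk (valIdeal v hnn (α w)) (f w)) :=
  germ_quotient_iso_ultraproduct_of_quotients_general R Γ v hnn W 𝒰 α
end
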